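/- For every integer n ≥ 1, p_{4n,μ}(1,-1) = μ · 2^{2n} · (Π_{k=n+1}^{2n-1} (μ+k)) / (Π_{k=1}^{n} (μ+k-1/2)). -/

import Mathlib

open Finset

/-- The μ-deformed factorial function γ_μ. -/
noncomputable def gammaMu (μ : ℝ) : ℕ → ℝ
  | 0 => 1
  | n + 1 => ((n + 1 : ℝ) + 2 * μ * (if Odd (n + 1) then 1 else 0)) * gammaMu μ n

/-- The μ-deformed binomial coefficient C_μ(n,k), zero outside 0 ≤ k ≤ n. -/
noncomputable def binomMu (μ : ℝ) (n : ℕ) (k : ℤ) : ℝ :=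
  if 0 ≤ k ∧ k ≤ (n : ℤ) then gammaMu μ n / (gammaMu μ (n - k.toNat) * gammaMu μ k.toNat) else 0

/-- The n-th μ-deformed binomial polynomial p_{n,μ}(x,y). -/
noncomputable def pMu (μ : ℝ) (n : ℕ) (x y : ℂ) : ℂ :=
  ∑ k ∈ Finset.range (n + 1), (binomMu μ n k : ℂ) * x ^ k * y ^ (n - k)

/-- The μ-deformed exponential function. -/
noncomputable def expMu (μ : ℝ) (z : ℂ) : ℂ :=
  ∑' n : ℕ, z ^ n / (gammaMu μ n : ℂ)

/-- The Bessel function of the first kind of order ν, for positive real argument. -/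
noncomputable def besselJ (ν x : ℝ) : ℝ :=
  ∑' m : ℕ, ((-1) ^ m / (Nat.factorial m * Real.Gamma (ν + m + 1))) * (x / 2) ^ ((2 * m : ℝ) + ν)

/-!
With `a = μ + 1/2` one has `γ_μ(2j) = 4^j j! (a)_j` and `γ_μ(2j+1) = 2·4^j j! (a)_{j+1}` (rising
factorials). Write `x↓k = x(x-1)⋯(x-k+1)` and `r = μ + m - 1/2`, so that `(a)_m = r↓m`. Multiplied
by `r↓m`, the even-index coefficients `C_μ(2m, 2j)` become `binom(m, j) r↓j r↓(m-j)` and the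
odd-index ones `C_μ(2m, 2j+1)` become `m binom(m-1, j) r↓j r↓(m-1-j)`. By Chu–Vandermonde the even
and odd parts of the alternating sum are then `(2r)↓m` and `m (2r)↓(m-1)`, whose difference is
`2μ (2r)↓(m-1)`. For `m = 2n` the duplication formula for `(2x)↓(2n-1)` reduces this to the stated
quotient.
-/

open Nat Polynomial

section descPochhammer

variable (R : Type*) [CommRing R]

theorem descPochhammer_succ_eval_left (x : R) (n : ℕ) :
    (descPochhammer R (n + 1)).eval x = x * (descPochhammer R n).eval (x - 1) := by
  simp [descPochhammer_succ_left, eval_comp]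

theorem descPochhammer_add_eval (x : R) (l i : ℕ) :
    (descPochhammer R (l + i)).eval x =
      (descPochhammer R l).eval x * (descPochhammer R i).eval (x - l) := by
  rw [← descPochhammer_mul, eval_mul, eval_comp]
  simp

theorem descPochhammer_eval_add (x y : R) (m : ℕ) :
    (descPochhammer R m).eval (x + y) = ∑ j ∈ range (m + 1),
      m.choose j * ((descPochhammer R j).eval x * (descPochhammer R (m - j)).eval y) := by
  have key := Ring.descPochhammer_smeval_add m (Commute.all x y)
  simp only [← aeval_eq_smeval, aeval_def, eval₂_eq_eval_map, descPochhammer_map] at key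
  rw [key, Nat.sum_antidiagonal_eq_sum_range_succ (fun i j => (m.choose i : R) *
    ((descPochhammer R i).eval x * (descPochhammer R j).eval y))]

theorem prod_Icc_add_eq_descPochhammer_eval (x : R) (s l : ℕ) :
    ∏ k ∈ Icc (s + 1) (s + l), (x + k) = (descPochhammer R l).eval (x + (s + l : ℕ)) := by
  induction l with
  | zero => simp
  | succ l ih =>
    rw [← add_assoc, prod_Icc_succ_top (by omega), ih, descPochhammer_succ_eval_left]
    push_cast
    ring_nf

end descPochhammer

theorem descPochhammer_two_mul_add_one_eval_two_mul (K : Type*) [Field K] [CharZero K]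
    (x : K) (n : ℕ) :
    (descPochhammer K (2 * n + 1)).eval (2 * x) =
      2 * 4 ^ n * (descPochhammer K (n + 1)).eval x * (descPochhammer K n).eval (x - 1 / 2) := by
  induction n with
  | zero => simp
  | succ n ih =>
    rw [show 2 * (n + 1) + 1 = 2 * n + 1 + 1 + 1 by ring, descPochhammer_succ_eval (2 * n + 1 + 1),
      descPochhammer_succ_eval (2 * n + 1), ih, descPochhammer_succ_eval (n + 1) x,
      descPochhammer_succ_eval n (x - 1 / 2)]
    push_cast
    ring_nf

theorem sum_range_two_mul_add_one_neg_one_pow_mul {R : Type*} [CommRing R] (f : ℕ → R) (m : ℕ) :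
    ∑ k ∈ range (2 * m + 1), (-1) ^ k * f k =
      ∑ j ∈ range (m + 1), f (2 * j) - ∑ j ∈ range m, f (2 * j + 1) := by
  induction m with
  | zero => simp
  | succ m ih =>
    rw [show 2 * (m + 1) + 1 = 2 * m + 1 + 1 + 1 by ring, sum_range_succ, sum_range_succ, ih,
      sum_range_succ (fun j => f (2 * j)) (m + 1), sum_range_succ (fun j => f (2 * j + 1)) m,
      (odd_two_mul_add_one m).neg_one_pow, show 2 * m + 1 + 1 = 2 * (m + 1) by ring,
      (even_two_mul (m + 1)).neg_one_pow]
    ring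

theorem gammaMu_two_mul_add_one_eq_mul (μ : ℝ) (j : ℕ) :
    gammaMu μ (2 * j + 1) = (2 * j + 1 + 2 * μ) * gammaMu μ (2 * j) := by
  rw [gammaMu, if_pos (odd_two_mul_add_one j)]
  push_cast
  ring

theorem gammaMu_two_mul_add_two_eq_mul (μ : ℝ) (j : ℕ) :
    gammaMu μ (2 * j + 2) = (2 * j + 2) * gammaMu μ (2 * j + 1) := by
  rw [gammaMu, if_neg (Nat.not_odd_iff_even.mpr ⟨j + 1, by ring⟩)]
  push_cast
  ring

theorem gammaMu_two_mul (μ : ℝ) (j : ℕ) :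
    gammaMu μ (2 * j) = 4 ^ j * j ! * (descPochhammer ℝ j).eval (μ + j - 1 / 2) := by
  induction j with
  | zero => simp [gammaMu]
  | succ j ih =>
    rw [mul_add_one, gammaMu_two_mul_add_two_eq_mul, gammaMu_two_mul_add_one_eq_mul, ih,
      descPochhammer_succ_eval_left, Nat.factorial_succ]
    push_cast
    ring_nf

theorem gammaMu_two_mul_add_one (μ : ℝ) (j : ℕ) :
    gammaMu μ (2 * j + 1) =
      2 * 4 ^ j * j ! * (descPochhammer ℝ (j + 1)).eval (μ + j + 1 / 2) := by
  rw [gammaMu_two_mul_add_one_eq_mul, gammaMu_two_mul, descPochhammer_succ_eval_left]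
  ring_nf

theorem binomMu_natCast (μ : ℝ) {n k : ℕ} (hk : k ≤ n) :
    binomMu μ n k = gammaMu μ n / (gammaMu μ (n - k) * gammaMu μ k) := by
  rw [binomMu, if_pos ⟨Int.natCast_nonneg k, by exact_mod_cast hk⟩, Int.toNat_natCast]

section gammaMu

variable {μ : ℝ}

theorem gammaMu_pos (hμ : -(1 / 2 : ℝ) < μ) (n : ℕ) : 0 < gammaMu μ n := by
  induction n with
  | zero => simp [gammaMu]
  | succ n ih =>
    have hfactor : 0 < (n + 1 : ℝ) + 2 * μ * (if Odd (n + 1) then 1 else 0) := by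
      split_ifs <;> linarith [(n.cast_nonneg : (0 : ℝ) ≤ n)]
    exact mul_pos hfactor ih

theorem binomMu_two_mul_two_mul (hμ : -(1 / 2 : ℝ) < μ) {m j : ℕ} (hj : j ≤ m) :
    binomMu μ (2 * m) (2 * j : ℕ) * (descPochhammer ℝ m).eval (μ + m - 1 / 2) =
      m.choose j * ((descPochhammer ℝ j).eval (μ + m - 1 / 2) *
        (descPochhammer ℝ (m - j)).eval (μ + m - 1 / 2)) := by
  obtain ⟨k, rfl⟩ := Nat.exists_eq_add_of_le hj
  have hγ := gammaMu_pos hμ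
  rw [binomMu_natCast μ (by omega), show 2 * (j + k) - 2 * j = 2 * k by omega,
    div_mul_eq_mul_div, div_eq_iff (mul_pos (hγ _) (hγ _)).ne', Nat.add_sub_cancel_left,
    gammaMu_two_mul, gammaMu_two_mul, gammaMu_two_mul]
  set r : ℝ := μ + ↑(j + k) - 1 / 2
  have hsplit_j : (descPochhammer ℝ (j + k)).eval r =
      (descPochhammer ℝ j).eval r * (descPochhammer ℝ k).eval (μ + k - 1 / 2) := by
    rw [descPochhammer_add_eval, show r - j = μ + k - 1 / 2 by push_cast [r]; ring]
  have hsplit_k : (descPochhammer ℝ (j + k)).eval r =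
      (descPochhammer ℝ k).eval r * (descPochhammer ℝ j).eval (μ + j - 1 / 2) := by
    rw [add_comm j k, descPochhammer_add_eval, show r - k = μ + j - 1 / 2 by push_cast [r]; ring]
  have hfac : ((j + k) ! : ℝ) = (j + k).choose j * j ! * k ! := by
    rw [Nat.choose_symm_add]
    exact_mod_cast (Nat.add_choose_mul_factorial_mul_factorial j k).symm
  -- `γ_μ(2m) r↓m` contains `r↓m` twice: split one copy at `j`, the other at `k`.
  nth_rewrite 1 [hsplit_j]
  rw [hsplit_k, hfac, pow_add]
  ring

theorem binomMu_two_mul_two_mul_add_one (hμ : -(1 / 2 : ℝ) < μ) {M j : ℕ} (hj : j ≤ M) :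
    binomMu μ (2 * (M + 1)) (2 * j + 1 : ℕ) * (descPochhammer ℝ (M + 1)).eval (μ + M + 1 / 2) =
      (M + 1) * (M.choose j * ((descPochhammer ℝ j).eval (μ + M + 1 / 2) *
        (descPochhammer ℝ (M - j)).eval (μ + M + 1 / 2))) := by
  obtain ⟨k, rfl⟩ := Nat.exists_eq_add_of_le hj
  have hγ := gammaMu_pos hμ
  rw [binomMu_natCast μ (by omega), show 2 * (j + k + 1) - (2 * j + 1) = 2 * k + 1 by omega,
    div_mul_eq_mul_div, div_eq_iff (mul_pos (hγ _) (hγ _)).ne', Nat.add_sub_cancel_left,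
    gammaMu_two_mul, gammaMu_two_mul_add_one, gammaMu_two_mul_add_one]
  set r : ℝ := μ + ↑(j + k) + 1 / 2
  have hr : μ + ↑(j + k + 1) - 1 / 2 = r := by push_cast [r]; ring
  have hsplit_j : (descPochhammer ℝ (j + k + 1)).eval r =
      (descPochhammer ℝ j).eval r * (descPochhammer ℝ (k + 1)).eval (μ + k + 1 / 2) := by
    rw [add_assoc, descPochhammer_add_eval, show r - j = μ + k + 1 / 2 by push_cast [r]; ring]
  have hsplit_k : (descPochhammer ℝ (j + k + 1)).eval r =
      (descPochhammer ℝ k).eval r * (descPochhammer ℝ (j + 1)).eval (μ + j + 1 / 2) := by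
    rw [show j + k + 1 = k + (j + 1) by ring, descPochhammer_add_eval,
      show r - k = μ + j + 1 / 2 by push_cast [r]; ring]
  have hfac : ((j + k + 1) ! : ℝ) = (j + k + 1) * ((j + k).choose j * j ! * k !) := by
    rw [Nat.factorial_succ, Nat.choose_symm_add]
    exact_mod_cast congrArg ((j + k + 1) * ·) (Nat.add_choose_mul_factorial_mul_factorial j k).symm
  rw [hr]
  nth_rewrite 1 [hsplit_j]
  rw [hsplit_k, hfac, pow_succ, pow_add]
  push_cast
  ring

theorem sum_range_neg_one_pow_mul_binomMu_two_mul (hμ : -(1 / 2 : ℝ) < μ) (M : ℕ) :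
    (∑ k ∈ range (2 * (M + 1) + 1), (-1) ^ k * binomMu μ (2 * (M + 1)) k) *
        (descPochhammer ℝ (M + 1)).eval (μ + M + 1 / 2) =
      2 * μ * (descPochhammer ℝ M).eval (2 * μ + 2 * M + 1) := by
  set r : ℝ := μ + M + 1 / 2
  have heven : ∑ j ∈ range (M + 1 + 1), binomMu μ (2 * (M + 1)) (2 * j : ℕ) *
      (descPochhammer ℝ (M + 1)).eval r = (descPochhammer ℝ (M + 1)).eval (r + r) := by
    rw [descPochhammer_eval_add ℝ r r]
    refine sum_congr rfl fun j hj => ?_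
    have h := binomMu_two_mul_two_mul hμ (m := M + 1) (Nat.lt_succ_iff.mp (mem_range.mp hj))
    rwa [show μ + ↑(M + 1) - 1 / 2 = r by push_cast [r]; ring] at h
  have hodd : ∑ j ∈ range (M + 1), binomMu μ (2 * (M + 1)) (2 * j + 1 : ℕ) *
      (descPochhammer ℝ (M + 1)).eval r = (M + 1) * (descPochhammer ℝ M).eval (r + r) := by
    rw [descPochhammer_eval_add ℝ r r, mul_sum]
    exact sum_congr rfl fun j hj =>
      binomMu_two_mul_two_mul_add_one hμ (Nat.lt_succ_iff.mp (mem_range.mp hj))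
  rw [sum_range_two_mul_add_one_neg_one_pow_mul, sub_mul, sum_mul, sum_mul, heven, hodd,
    descPochhammer_succ_eval, show r + r = 2 * μ + 2 * M + 1 by ring]
  ring

theorem sum_range_neg_one_pow_mul_binomMu_four_mul (hμ : -(1 / 2 : ℝ) < μ) (N : ℕ) :
    (∑ k ∈ range (4 * (N + 1) + 1), (-1) ^ k * binomMu μ (4 * (N + 1)) k) *
        (descPochhammer ℝ (N + 1)).eval (μ + N + 1 / 2) =
      μ * 4 ^ (N + 1) * (descPochhammer ℝ N).eval (μ + 2 * N + 1) := by
  set x : ℝ := μ + 2 * N + 3 / 2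
  have hsum := sum_range_neg_one_pow_mul_binomMu_two_mul hμ (2 * N + 1)
  have hsplit : (descPochhammer ℝ (2 * N + 1 + 1)).eval (μ + ↑(2 * N + 1) + 1 / 2) =
      (descPochhammer ℝ (N + 1)).eval x * (descPochhammer ℝ (N + 1)).eval (μ + N + 1 / 2) := by
    rw [show 2 * N + 1 + 1 = (N + 1) + (N + 1) by ring, descPochhammer_add_eval]
    congr 2 <;> push_cast [x] <;> ring
  have hdup : (descPochhammer ℝ (2 * N + 1)).eval (2 * μ + 2 * ↑(2 * N + 1) + 1) =
      2 * 4 ^ N * (descPochhammer ℝ (N + 1)).eval x * (descPochhammer ℝ N).eval (μ + 2 * N + 1) := by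
    rw [show 2 * μ + 2 * ↑(2 * N + 1) + 1 = 2 * x by push_cast [x]; ring,
      descPochhammer_two_mul_add_one_eval_two_mul]
    congr 2; push_cast [x]; ring
  have hx : 0 < (descPochhammer ℝ (N + 1)).eval x :=
    descPochhammer_pos (by push_cast [x]; linarith)
  rw [show 4 * (N + 1) = 2 * (2 * N + 1 + 1) by ring]
  rw [hsplit, hdup] at hsum
  apply mul_right_cancel₀ hx.ne'
  linear_combination hsum

end gammaMu

theorem pMu_one_neg_one_of_even (μ : ℝ) {n : ℕ} (hn : Even n) :
    pMu μ n 1 (-1) = ((∑ k ∈ range (n + 1), (-1) ^ k * binomMu μ n k : ℝ) : ℂ) := by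
  obtain ⟨t, rfl⟩ := hn
  rw [pMu]
  push_cast
  refine sum_congr rfl fun k hk => ?_
  have hk : k ≤ t + t := Nat.lt_succ_iff.mp (mem_range.mp hk)
  rw [one_pow, mul_one, mul_comm, neg_one_pow_eq_pow_mod_two,
    show (t + t - k) % 2 = k % 2 by omega, ← neg_one_pow_eq_pow_mod_two]

theorem pMu_four_n (μ : ℝ) (hμ : -(1/2 : ℝ) < μ) (n : ℕ) (hn : 1 ≤ n) :
    pMu μ (4 * n) 1 (-1) =
      ((μ * 2 ^ (2 * n) * (∏ k ∈ Finset.Icc (n + 1) (2 * n - 1), (μ + (k : ℝ))) /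
        (∏ k ∈ Finset.Icc 1 n, (μ + (k : ℝ) - 1/2)) : ℝ) : ℂ) := by
  obtain ⟨N, rfl⟩ : ∃ N, n = N + 1 := ⟨n - 1, by omega⟩
  have hnum : ∏ k ∈ Icc (N + 1 + 1) (2 * (N + 1) - 1), (μ + (k : ℝ)) =
      (descPochhammer ℝ N).eval (μ + 2 * N + 1) := by
    rw [show 2 * (N + 1) - 1 = N + 1 + N by omega, prod_Icc_add_eq_descPochhammer_eval]
    push_cast
    ring_nf
  have hden : ∏ k ∈ Icc 1 (N + 1), (μ + (k : ℝ) - 1 / 2) =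
      (descPochhammer ℝ (N + 1)).eval (μ + N + 1 / 2) := by
    calc ∏ k ∈ Icc 1 (N + 1), (μ + (k : ℝ) - 1 / 2)
        = ∏ k ∈ Icc (0 + 1) (0 + (N + 1)), (μ - 1 / 2 + (k : ℝ)) := by
          simp only [zero_add]; exact prod_congr rfl fun k _ => by ring
      _ = _ := by rw [prod_Icc_add_eq_descPochhammer_eval]; push_cast; ring_nf
  have hden_pos : 0 < (descPochhammer ℝ (N + 1)).eval (μ + N + 1 / 2) :=
    descPochhammer_pos (by push_cast; linarith)
  rw [pMu_one_neg_one_of_even μ ⟨2 * (N + 1), by ring⟩, hnum, hden, Complex.ofReal_inj,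
    eq_div_iff hden_pos.ne', pow_mul, show (2 : ℝ) ^ 2 = 4 by norm_num]
  exact sum_range_neg_one_pow_mul_binomMu_four_mul hμ N
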